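/- arXiv:2101.02934 — 10 statements merged into one kernel-verified Lean document; each statement's English description precedes it below -/
import Mathlib

section
/- A positive function f on (0,∞) is HH-convex (i.e., f((αx^{-1}+(1-α)y^{-1})^{-1}) ≤ (αf(x)^{-1}+(1-α)f(y)^{-1})^{-1} for all x,y>0, α∈[0,1]) if and only if the function h(t)=t/f(t) is concave on (0,∞). -/
/-!
Substituting `α = a x / (a x + b y)` turns the harmonic mean `(α x⁻¹ + (1 - α) y⁻¹)⁻¹` into the
arithmetic mean `z = a x + b y`, and multiplying the HH-inequality, in the form
`α / f x + (1 - α) / f y ≤ 1 / f z`, by `z` turns it into `a (x / f x) + b (y / f y) ≤ z / f z`.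
Every `α ∈ [0, 1]` arises from some convex weights `(a, b)`, so the two inequalities are equivalent.
-/

noncomputable def harmonicWeight (a b x y : ℝ) : ℝ := a * x / (a * x + b * y)

lemma mul_add_one_sub_mul_pos {α u v : ℝ} (hu : 0 < u) (hv : 0 < v)
    (hα : α ∈ Set.Icc (0 : ℝ) 1) : 0 < α * u + (1 - α) * v := by
  simpa using convex_Ioi (0 : ℝ) hu hv hα.1 (sub_nonneg.2 hα.2) (add_sub_cancel α 1)

section HarmonicWeight

variable {a b x y : ℝ}

lemma harmonicWeight_mem_Icc (ha : 0 ≤ a) (hb : 0 ≤ b) (hx : 0 ≤ x) (hy : 0 ≤ y) :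
    harmonicWeight a b x y ∈ Set.Icc (0 : ℝ) 1 :=
  ⟨by unfold harmonicWeight; positivity,
    div_le_one_of_le₀ (le_add_of_nonneg_right (by positivity)) (by positivity)⟩

lemma one_sub_harmonicWeight (h : a * x + b * y ≠ 0) :
    1 - harmonicWeight a b x y = b * y / (a * x + b * y) := by
  unfold harmonicWeight
  field_simp
  ring

lemma harmonicWeight_harmonicMean (hx : x ≠ 0) (hy : y ≠ 0) (hab : a + b = 1)
    (h : a * x + b * y ≠ 0) :
    (harmonicWeight a b x y * x⁻¹ + (1 - harmonicWeight a b x y) * y⁻¹)⁻¹ = a * x + b * y := by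
  rw [one_sub_harmonicWeight h, harmonicWeight]
  field_simp
  exact hab.symm

lemma weighted_div_eq_mul_harmonicWeight (u v : ℝ) (h : a * x + b * y ≠ 0) :
    a * (x / u) + b * (y / v) =
      (a * x + b * y) * (harmonicWeight a b x y * u⁻¹ + (1 - harmonicWeight a b x y) * v⁻¹) := by
  rw [one_sub_harmonicWeight h, harmonicWeight]
  field_simp

lemma exists_harmonicWeight_eq (hx : 0 < x) (hy : 0 < y) {α : ℝ} (hα : α ∈ Set.Icc (0 : ℝ) 1) :
    ∃ a b : ℝ, 0 ≤ a ∧ 0 ≤ b ∧ a + b = 1 ∧ harmonicWeight a b x y = α := by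
  have hS := mul_add_one_sub_mul_pos (inv_pos.2 hx) (inv_pos.2 hy) hα
  set H := (α * x⁻¹ + (1 - α) * y⁻¹)⁻¹
  have hH : 0 < H := inv_pos.mpr hS
  have hsum : α * H * x⁻¹ * x + (1 - α) * H * y⁻¹ * y = H := by
    field_simp
    ring
  refine ⟨α * H * x⁻¹, (1 - α) * H * y⁻¹, by have := hα.1; positivity,
    mul_nonneg (mul_nonneg (sub_nonneg.2 hα.2) hH.le) (by positivity), ?_, ?_⟩
  · calc α * H * x⁻¹ + (1 - α) * H * y⁻¹ = H * (α * x⁻¹ + (1 - α) * y⁻¹) := by ring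
      _ = 1 := inv_mul_cancel₀ hS.ne'
  · rw [harmonicWeight, hsum]
    field_simp

end HarmonicWeight

lemma concave_ineq_iff_hh_ineq {f : ℝ → ℝ} {a b x y : ℝ} (hx : 0 < x) (hy : 0 < y)
    (ha : 0 ≤ a) (hb : 0 ≤ b) (hab : a + b = 1)
    (hf : ∀ t ∈ Set.Ioi (0 : ℝ), 0 < f t) :
    a * (x / f x) + b * (y / f y) ≤ (a * x + b * y) / f (a * x + b * y) ↔
      f ((harmonicWeight a b x y * x⁻¹ + (1 - harmonicWeight a b x y) * y⁻¹)⁻¹) ≤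
        (harmonicWeight a b x y * (f x)⁻¹ + (1 - harmonicWeight a b x y) * (f y)⁻¹)⁻¹ := by
  have hz : 0 < a * x + b * y := by
    simpa using (convex_Ioi (0 : ℝ)) hx hy ha hb hab
  have hS := mul_add_one_sub_mul_pos (inv_pos.2 (hf x hx)) (inv_pos.2 (hf y hy))
    (harmonicWeight_mem_Icc ha hb hx.le hy.le)
  rw [harmonicWeight_harmonicMean hx.ne' hy.ne' hab hz.ne',
    weighted_div_eq_mul_harmonicWeight _ _ hz.ne', div_eq_mul_inv,
    mul_le_mul_iff_right₀ hz, le_inv_comm₀ (hf _ hz) hS]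

theorem hh_convex_iff_t_div_f_concave (f : ℝ → ℝ) (hf : ∀ x ∈ Set.Ioi (0:ℝ), 0 < f x) :
    (∀ x ∈ Set.Ioi (0:ℝ), ∀ y ∈ Set.Ioi (0:ℝ), ∀ α ∈ Set.Icc (0:ℝ) 1,
      f ((α * x⁻¹ + (1 - α) * y⁻¹)⁻¹) ≤ (α * (f x)⁻¹ + (1 - α) * (f y)⁻¹)⁻¹) ↔
    ConcaveOn ℝ (Set.Ioi (0:ℝ)) (fun t => t / f t) := by
  constructor
  · refine fun hH ↦ ⟨convex_Ioi 0, fun x hx y hy a b ha hb hab ↦ ?_⟩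
    simpa only [smul_eq_mul] using (concave_ineq_iff_hh_ineq hx hy ha hb hab hf).2
      (hH x hx y hy _ (harmonicWeight_mem_Icc ha hb (le_of_lt hx) (le_of_lt hy)))
  · intro hc x hx y hy α hα
    obtain ⟨a, b, ha, hb, hab, rfl⟩ := exists_harmonicWeight_eq hx hy hα
    exact (concave_ineq_iff_hh_ineq hx hy ha hb hab hf).1
      (by simpa only [smul_eq_mul] using hc.2 hx hy ha hb hab)
end

section
/- If f:(0,∞)→(0,∞) is HH-convex, then for all x_1,…,x_n>0 and weights α_i ≥ 0 with ∑α_i=1, f((∑_i α_i/x_i)^{-1}) ≤ (∑_i α_i/f(x_i))^{-1}. -/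
/-!
Put `g t = (f t⁻¹)⁻¹`. Since `H_α(x, y)⁻¹ = α / x + (1 - α) / y`, HH-convexity of a positive `f`
says precisely that `g` is concave on `(0, ∞)`. The inequality is Jensen's inequality for `g` at
the points `1 / xᵢ`, translated back through the same change of variables.
-/

def IsHHConvex (f : ℝ → ℝ) : Prop :=
  ∀ x ∈ Set.Ioi (0:ℝ), ∀ y ∈ Set.Ioi (0:ℝ), ∀ α ∈ Set.Icc (0:ℝ) 1,
    f ((α / x + (1 - α) / y)⁻¹) ≤ (α / f x + (1 - α) / f y)⁻¹

namespace IsHHConvex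

open Set

variable {f : ℝ → ℝ}

theorem concaveOn_inv_comp_inv (hHH : IsHHConvex f) (hf : ∀ x ∈ Ioi (0:ℝ), 0 < f x) :
    ConcaveOn ℝ (Ioi 0) (fun t => (f t⁻¹)⁻¹) := by
  refine ⟨convex_Ioi 0, fun u hu v hv a b ha hb hab => ?_⟩
  have hmean : a • u + b • v ∈ Ioi (0:ℝ) := convex_Ioi 0 hu hv ha hb hab
  have hHH_inv :=
    hHH u⁻¹ (mem_Ioi.2 (inv_pos.2 hu)) v⁻¹ (mem_Ioi.2 (inv_pos.2 hv)) a ⟨ha, by linarith⟩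
  rw [show 1 - a = b by linarith, div_inv_eq_mul, div_inv_eq_mul] at hHH_inv
  simpa only [inv_inv, smul_eq_mul, div_eq_mul_inv] using
    inv_anti₀ (hf _ (mem_Ioi.2 (inv_pos.2 hmean))) hHH_inv

theorem map_inv_sum_div_le {ι : Type*} (hHH : IsHHConvex f) (hf : ∀ x ∈ Ioi (0:ℝ), 0 < f x)
    {s : Finset ι} {x w : ι → ℝ} (hx : ∀ i ∈ s, 0 < x i) (hw : ∀ i ∈ s, 0 ≤ w i)
    (hw1 : ∑ i ∈ s, w i = 1) :
    f ((∑ i ∈ s, w i / x i)⁻¹) ≤ (∑ i ∈ s, w i / f (x i))⁻¹ := by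
  have hjensen := (hHH.concaveOn_inv_comp_inv hf).le_map_sum hw hw1
    (fun i hi => inv_pos.2 (hx i hi))
  simp only [inv_inv, smul_eq_mul, ← div_eq_mul_inv] at hjensen
  have hmean : 0 < ∑ i ∈ s, w i / x i := by
    simpa only [mem_Ioi, smul_eq_mul, ← div_eq_mul_inv] using
      (convex_Ioi (0:ℝ)).sum_mem hw hw1 (fun i hi => inv_pos.2 (hx i hi))
  have hmean_f : 0 < ∑ i ∈ s, w i / f (x i) := by
    simpa only [mem_Ioi, smul_eq_mul, ← div_eq_mul_inv] using
      (convex_Ioi (0:ℝ)).sum_mem hw hw1 (fun i hi => inv_pos.2 (hf _ (mem_Ioi.2 (hx i hi))))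
  exact (le_inv_comm₀ (hf _ (mem_Ioi.2 (inv_pos.2 hmean))) hmean_f).2 hjensen

end IsHHConvex

theorem jensen_hh (f : ℝ → ℝ) (hf : ∀ x ∈ Set.Ioi (0:ℝ), 0 < f x)
    (hHH : ∀ x ∈ Set.Ioi (0:ℝ), ∀ y ∈ Set.Ioi (0:ℝ), ∀ α ∈ Set.Icc (0:ℝ) 1,
      f ((α / x + (1 - α) / y)⁻¹) ≤ (α / f x + (1 - α) / f y)⁻¹)
    (n : ℕ) (x α : Fin n → ℝ) (hx : ∀ i, 0 < x i) (hα : ∀ i, 0 ≤ α i)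
    (hsum : ∑ i, α i = 1) :
    f ((∑ i, α i / x i)⁻¹) ≤ (∑ i, α i / f (x i))⁻¹ :=
  IsHHConvex.map_inv_sum_div_le hHH hf (fun i _ => hx i) (fun i _ => hα i) hsum
end

section
/- Let f:(0,∞)→(0,∞) and define the perspective g(x,y)=y·f(x/y) for x,y>0. Then f is GG-convex if and only if g is jointly GG-convex, i.e., g(a^α b^{1-α}, x^α y^{1-α}) ≤ g(a,x)^α g(b,y)^{1-α} for all a,b,x,y>0 and α∈[0,1]. -/
/-!
For `x, y > 0` the geometric mean commutes with division,
`(a^α b^(1-α)) / (x^α y^(1-α)) = (a/x)^α (b/y)^(1-α)`, so applying GG-convexity of `f` at the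
points `a/x`, `b/y` and multiplying by the positive weight `x^α y^(1-α)` gives joint GG-convexity
of the perspective. Conversely, the perspective restricted to `x = y = 1` is `f` itself.
-/

open Set

def GGConvex (f : ℝ → ℝ) : Prop :=
  ∀ u ∈ Ioi (0:ℝ), ∀ v ∈ Ioi (0:ℝ), ∀ α ∈ Icc (0:ℝ) 1,
    f (u ^ α * v ^ (1 - α)) ≤ f u ^ α * f v ^ (1 - α)

def JointlyGGConvex (g : ℝ → ℝ → ℝ) : Prop :=
  ∀ a ∈ Ioi (0:ℝ), ∀ b ∈ Ioi (0:ℝ), ∀ x ∈ Ioi (0:ℝ), ∀ y ∈ Ioi (0:ℝ), ∀ α ∈ Icc (0:ℝ) 1,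
    g (a ^ α * b ^ (1 - α)) (x ^ α * y ^ (1 - α)) ≤ g a x ^ α * g b y ^ (1 - α)

lemma geom_mean_div_geom_mean {a b x y : ℝ} (ha : 0 ≤ a) (hb : 0 ≤ b) (hx : 0 < x) (hy : 0 < y)
    (α : ℝ) :
    a ^ α * b ^ (1 - α) / (x ^ α * y ^ (1 - α)) = (a / x) ^ α * (b / y) ^ (1 - α) := by
  rw [Real.div_rpow ha hx.le, Real.div_rpow hb hy.le]
  have : x ^ α ≠ 0 := (Real.rpow_pos_of_pos hx α).ne'
  have : y ^ (1 - α) ≠ 0 := (Real.rpow_pos_of_pos hy (1 - α)).ne'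
  field_simp

lemma geom_mean_mul_geom_mean {x y p q : ℝ} (hx : 0 ≤ x) (hy : 0 ≤ y) (hp : 0 ≤ p) (hq : 0 ≤ q)
    (α : ℝ) :
    x ^ α * y ^ (1 - α) * (p ^ α * q ^ (1 - α)) = (x * p) ^ α * (y * q) ^ (1 - α) := by
  rw [Real.mul_rpow hx hp, Real.mul_rpow hy hq]
  ring

theorem GGConvex.jointlyGGConvex_perspective {f : ℝ → ℝ} (hf : GGConvex f)
    (hpos : ∀ x ∈ Ioi (0:ℝ), 0 < f x) : JointlyGGConvex fun x y => y * f (x / y) := by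
  intro a ha b hb x hx y hy α hα
  have hax : a / x ∈ Ioi (0:ℝ) := mem_Ioi.2 (div_pos ha hx)
  have hby : b / y ∈ Ioi (0:ℝ) := mem_Ioi.2 (div_pos hb hy)
  have hweight : 0 ≤ x ^ α * y ^ (1 - α) :=
    mul_nonneg (Real.rpow_nonneg hx.le _) (Real.rpow_nonneg hy.le _)
  dsimp only
  calc x ^ α * y ^ (1 - α) * f (a ^ α * b ^ (1 - α) / (x ^ α * y ^ (1 - α)))
      = x ^ α * y ^ (1 - α) * f ((a / x) ^ α * (b / y) ^ (1 - α)) := by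
        rw [geom_mean_div_geom_mean ha.le hb.le hx hy]
    _ ≤ x ^ α * y ^ (1 - α) * (f (a / x) ^ α * f (b / y) ^ (1 - α)) :=
        mul_le_mul_of_nonneg_left (hf _ hax _ hby α hα) hweight
    _ = (x * f (a / x)) ^ α * (y * f (b / y)) ^ (1 - α) :=
        geom_mean_mul_geom_mean hx.le hy.le (hpos _ hax).le (hpos _ hby).le α

theorem JointlyGGConvex.ggConvex_of_perspective {f : ℝ → ℝ}
    (hg : JointlyGGConvex fun x y => y * f (x / y)) : GGConvex f := by
  intro u hu v hv α hα
  simpa using hg u hu v hv 1 (mem_Ioi.2 one_pos) 1 (mem_Ioi.2 one_pos) α hα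

theorem perspective_gg_convex_iff (f : ℝ → ℝ) (hf : ∀ x ∈ Set.Ioi (0:ℝ), 0 < f x)
    (g : ℝ → ℝ → ℝ) (hg : ∀ x y : ℝ, g x y = y * f (x / y)) :
    (∀ u ∈ Set.Ioi (0:ℝ), ∀ v ∈ Set.Ioi (0:ℝ), ∀ α ∈ Set.Icc (0:ℝ) 1,
      f (u ^ α * v ^ (1 - α)) ≤ f u ^ α * f v ^ (1 - α)) ↔
    (∀ a ∈ Set.Ioi (0:ℝ), ∀ b ∈ Set.Ioi (0:ℝ), ∀ x ∈ Set.Ioi (0:ℝ), ∀ y ∈ Set.Ioi (0:ℝ),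
      ∀ α ∈ Set.Icc (0:ℝ) 1,
      g (a ^ α * b ^ (1 - α)) (x ^ α * y ^ (1 - α)) ≤ g a x ^ α * g b y ^ (1 - α)) := by
  obtain rfl : g = fun x y => y * f (x / y) := funext₂ hg
  exact ⟨fun h => GGConvex.jointlyGGConvex_perspective h hf,
    JointlyGGConvex.ggConvex_of_perspective⟩
end

section
/- Let f:(0,∞)→(0,∞) and g(x,y)=y·f(x/y). Then f is HH-convex if and only if g is jointly HH-convex, i.e., g(H_α(a,b), H_α(x,y)) ≤ H_α(g(a,x), g(b,y)) for all a,b,x,y>0 and α∈[0,1], where H_α(u,v)=(α/u+(1-α)/v)^{-1}. -/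
/-!
Write `H_α(u, v) = (α / u + (1 - α) / v)⁻¹`. For `x, y > 0` and
`β = α y / (α y + (1 - α) x)` one has `H_α(x, y) · H_β(p, q) = H_α(x p, y q)`; in particular
`H_α(a, b) / H_α(x, y) = H_β(a / x, b / y)`. Hence for the perspective `g(x, y) = y f(x / y)`,
HH-convexity of `f` at `(a / x, b / y)` with weight `β`, multiplied by `H_α(x, y)`, is exactly
joint HH-convexity of `g` at `(a, x), (b, y)` with weight `α`. The converse is the slice `x = y = 1`.
-/

open Set

noncomputable def harmonicMean (α u v : ℝ) : ℝ := (α / u + (1 - α) / v)⁻¹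

def HHConvex (f : ℝ → ℝ) : Prop :=
  ∀ u ∈ Ioi (0:ℝ), ∀ v ∈ Ioi (0:ℝ), ∀ α ∈ Icc (0:ℝ) 1,
    f (harmonicMean α u v) ≤ harmonicMean α (f u) (f v)

def JointlyHHConvex (g : ℝ → ℝ → ℝ) : Prop :=
  ∀ a ∈ Ioi (0:ℝ), ∀ b ∈ Ioi (0:ℝ), ∀ x ∈ Ioi (0:ℝ), ∀ y ∈ Ioi (0:ℝ), ∀ α ∈ Icc (0:ℝ) 1,
    g (harmonicMean α a b) (harmonicMean α x y) ≤ harmonicMean α (g a x) (g b y)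

noncomputable def perspective (f : ℝ → ℝ) (x y : ℝ) : ℝ := y * f (x / y)

noncomputable def perspectiveWeight (α x y : ℝ) : ℝ := α * y / (α * y + (1 - α) * x)

section HarmonicMean

variable {α x y : ℝ}

theorem harmonicMean_self (α u : ℝ) : harmonicMean α u u = u := by
  simp [harmonicMean, ← add_div]

theorem mul_add_one_sub_mul_pos_s11 (hα : α ∈ Icc (0:ℝ) 1) (hx : 0 < x) (hy : 0 < y) :
    0 < α * y + (1 - α) * x :=
  convex_Ioi (0:ℝ) hy hx hα.1 (sub_nonneg.mpr hα.2) (add_sub_cancel α 1)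

theorem harmonicMean_pos (hα : α ∈ Icc (0:ℝ) 1) (hx : 0 < x) (hy : 0 < y) :
    0 < harmonicMean α x y := by
  rw [harmonicMean, div_add_div _ _ hx.ne' hy.ne', inv_pos, mul_comm x]
  exact div_pos (mul_add_one_sub_mul_pos_s11 hα hx hy) (mul_pos hx hy)

theorem perspectiveWeight_mem_Icc (hα : α ∈ Icc (0:ℝ) 1) (hx : 0 < x) (hy : 0 < y) :
    perspectiveWeight α x y ∈ Icc (0:ℝ) 1 := by
  have hS := mul_add_one_sub_mul_pos_s11 hα hx hy
  refine ⟨div_nonneg (mul_nonneg hα.1 hy.le) hS.le, (div_le_one hS).mpr ?_⟩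
  nlinarith [hα.2]

theorem harmonicMean_mul_harmonicMean (hx : x ≠ 0) (hy : y ≠ 0)
    (hS : α * y + (1 - α) * x ≠ 0) (p q : ℝ) :
    harmonicMean α x y * harmonicMean (perspectiveWeight α x y) p q =
      harmonicMean α (x * p) (y * q) := by
  simp only [harmonicMean, perspectiveWeight, div_eq_mul_inv, mul_inv]
  generalize p⁻¹ = p'
  generalize q⁻¹ = q'
  rw [← mul_inv]
  congr 1
  -- `field_simp` only cancels the denominator once it is an atom
  set S := α * y + (1 - α) * x with hS_def
  field_simp
  rw [hS_def]
  ring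

end HarmonicMean

section Perspective

variable {f : ℝ → ℝ}

theorem HHConvex.jointlyHHConvex_perspective (hf : HHConvex f) :
    JointlyHHConvex (perspective f) := by
  intro a ha b hb x hx y hy α hα
  have hxy := harmonicMean_pos hα hx hy
  have hS := (mul_add_one_sub_mul_pos_s11 hα hx hy).ne'
  have hmean : harmonicMean α a b =
      harmonicMean α x y * harmonicMean (perspectiveWeight α x y) (a / x) (b / y) := by
    rw [harmonicMean_mul_harmonicMean hx.ne' hy.ne' hS, mul_div_cancel₀ a hx.ne',
      mul_div_cancel₀ b hy.ne']
  calc perspective f (harmonicMean α a b) (harmonicMean α x y)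
      = harmonicMean α x y * f (harmonicMean (perspectiveWeight α x y) (a / x) (b / y)) := by
        rw [perspective, hmean, mul_div_cancel_left₀ _ hxy.ne']
    _ ≤ harmonicMean α x y *
          harmonicMean (perspectiveWeight α x y) (f (a / x)) (f (b / y)) := by
        gcongr
        exact hf _ (mem_Ioi.2 (div_pos ha hx)) _ (mem_Ioi.2 (div_pos hb hy)) _ (perspectiveWeight_mem_Icc hα hx hy)
    _ = harmonicMean α (perspective f a x) (perspective f b y) :=
        harmonicMean_mul_harmonicMean hx.ne' hy.ne' hS _ _

theorem JointlyHHConvex.of_perspective (hg : JointlyHHConvex (perspective f)) : HHConvex f := by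
  intro u hu v hv α hα
  simpa only [perspective, harmonicMean_self, div_one, one_mul] using
    hg u hu v hv 1 (mem_Ioi.2 one_pos) 1 (mem_Ioi.2 one_pos) α hα

theorem hhConvex_iff_jointlyHHConvex_perspective :
    HHConvex f ↔ JointlyHHConvex (perspective f) :=
  ⟨HHConvex.jointlyHHConvex_perspective, JointlyHHConvex.of_perspective⟩

end Perspective

theorem perspective_hh_convex_iff_general (f : ℝ → ℝ)
    (g : ℝ → ℝ → ℝ) (hg : ∀ x y : ℝ, g x y = y * f (x / y)) :
    (∀ u ∈ Set.Ioi (0:ℝ), ∀ v ∈ Set.Ioi (0:ℝ), ∀ α ∈ Set.Icc (0:ℝ) 1,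
      f ((α / u + (1 - α) / v)⁻¹) ≤ (α / f u + (1 - α) / f v)⁻¹) ↔
    (∀ a ∈ Set.Ioi (0:ℝ), ∀ b ∈ Set.Ioi (0:ℝ), ∀ x ∈ Set.Ioi (0:ℝ), ∀ y ∈ Set.Ioi (0:ℝ),
      ∀ α ∈ Set.Icc (0:ℝ) 1,
      g ((α / a + (1 - α) / b)⁻¹) ((α / x + (1 - α) / y)⁻¹) ≤
        (α / g a x + (1 - α) / g b y)⁻¹) := by
  obtain rfl : g = perspective f := funext₂ hg
  exact hhConvex_iff_jointlyHHConvex_perspective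

theorem perspective_hh_convex_iff (f : ℝ → ℝ) (hf : ∀ x ∈ Set.Ioi (0:ℝ), 0 < f x)
    (g : ℝ → ℝ → ℝ) (hg : ∀ x y : ℝ, g x y = y * f (x / y)) :
    (∀ u ∈ Set.Ioi (0:ℝ), ∀ v ∈ Set.Ioi (0:ℝ), ∀ α ∈ Set.Icc (0:ℝ) 1,
      f ((α / u + (1 - α) / v)⁻¹) ≤ (α / f u + (1 - α) / f v)⁻¹) ↔
    (∀ a ∈ Set.Ioi (0:ℝ), ∀ b ∈ Set.Ioi (0:ℝ), ∀ x ∈ Set.Ioi (0:ℝ), ∀ y ∈ Set.Ioi (0:ℝ),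
      ∀ α ∈ Set.Icc (0:ℝ) 1,
      g ((α / a + (1 - α) / b)⁻¹) ((α / x + (1 - α) / y)⁻¹) ≤
        (α / g a x + (1 - α) / g b y)⁻¹) :=
  perspective_hh_convex_iff_general f g hg
end

section
/- Let f:(0,∞)→(0,∞) be AH-convex (hence convex) and g(x,y)=y f(x/y). Then for all a,b,x,y>0 and α∈[0,1]: g(αa+(1-α)b, αx+(1-α)y) ≤ H_α( αg(a,x)+(1-α)g(a,y), αg(b,x)+(1-α)g(b,y) ), where H_α(u,v)=(α/u+(1-α)/v)^{-1}. -/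
/-!
AH-convexity of `f`, applied at the points `a/s` and `b/s` with `s = αx + (1-α)y` and scaled
by `s`, gives `g(αa + (1-α)b, s) ≤ H_α(s f(a/s), s f(b/s))`. Since AH-convexity implies
convexity, the perspective `t ↦ t f(c/t)` is convex, so `s f(c/s) ≤ α g(c,x) + (1-α) g(c,y)`
for `c = a, b`; monotonicity of the weighted harmonic mean `H_α` concludes.
-/

open Set

noncomputable def weightedHarmonicMean (α u v : ℝ) : ℝ := (α / u + (1 - α) / v)⁻¹

section WeightedMeans

variable {α u v : ℝ}

lemma weightedArithMean_pos (hu : 0 < u) (hv : 0 < v) (hα₀ : 0 ≤ α) (hα₁ : α ≤ 1) :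
    0 < α * u + (1 - α) * v :=
  (convex_Ioi 0) (mem_Ioi.2 hu) (mem_Ioi.2 hv) hα₀ (sub_nonneg.2 hα₁) (add_sub_cancel α 1)

lemma inv_weightedArithMean_le (hu : 0 < u) (hv : 0 < v) (hα₀ : 0 ≤ α) (hα₁ : α ≤ 1) :
    (α * u + (1 - α) * v)⁻¹ ≤ α / u + (1 - α) / v := by
  simpa [smul_eq_mul, div_eq_mul_inv] using
    (convexOn_zpow (-1)).2 (mem_Ioi.2 hu) (mem_Ioi.2 hv) hα₀ (sub_nonneg.2 hα₁)
      (add_sub_cancel α 1)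

lemma weightedHarmonicMean_le_weightedArithMean (hu : 0 < u) (hv : 0 < v) (hα₀ : 0 ≤ α)
    (hα₁ : α ≤ 1) : weightedHarmonicMean α u v ≤ α * u + (1 - α) * v := by
  have hA := weightedArithMean_pos hu hv hα₀ hα₁
  have h := inv_anti₀ (inv_pos.2 hA) (inv_weightedArithMean_le hu hv hα₀ hα₁)
  rwa [inv_inv] at h

lemma weightedHarmonicMean_mono {u' v' : ℝ} (hu : 0 < u) (hv : 0 < v) (hα₀ : 0 ≤ α)
    (hα₁ : α ≤ 1) (huu' : u ≤ u') (hvv' : v ≤ v') :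
    weightedHarmonicMean α u v ≤ weightedHarmonicMean α u' v' := by
  have hu' := hu.trans_le huu'
  have hv' := hv.trans_le hvv'
  have hpos : 0 < α / u' + (1 - α) / v' :=
    (inv_pos.2 (weightedArithMean_pos hu' hv' hα₀ hα₁)).trans_le
      (inv_weightedArithMean_le hu' hv' hα₀ hα₁)
  refine inv_anti₀ hpos (add_le_add ?_ ?_)
  · exact div_le_div_of_nonneg_left hα₀ hu huu'
  · exact div_le_div_of_nonneg_left (sub_nonneg.2 hα₁) hv hvv'

lemma weightedHarmonicMean_mul (s : ℝ) :
    weightedHarmonicMean α (s * u) (s * v) = s * weightedHarmonicMean α u v := by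
  rw [weightedHarmonicMean, weightedHarmonicMean,
    show α / (s * u) + (1 - α) / (s * v) = s⁻¹ * (α / u + (1 - α) / v) by ring, mul_inv, inv_inv]

end WeightedMeans

lemma convexOn_Ioi_of_harmonic {f : ℝ → ℝ} (hf : ∀ x ∈ Ioi (0 : ℝ), 0 < f x)
    (hAH : ∀ u ∈ Ioi (0 : ℝ), ∀ v ∈ Ioi (0 : ℝ), ∀ α ∈ Icc (0 : ℝ) 1,
      f (α * u + (1 - α) * v) ≤ weightedHarmonicMean α (f u) (f v)) :
    ConvexOn ℝ (Ioi 0) f := by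
  refine ⟨convex_Ioi 0, fun u hu v hv α β hα hβ hαβ => ?_⟩
  obtain rfl : β = 1 - α := by linarith
  have hα₁ : α ≤ 1 := by linarith
  exact (hAH u hu v hv α ⟨hα, hα₁⟩).trans
    (weightedHarmonicMean_le_weightedArithMean (hf u hu) (hf v hv) hα hα₁)

lemma ConvexOn.mul_comp_div {f : ℝ → ℝ} (hf : ConvexOn ℝ (Ioi 0) f) {c : ℝ} (hc : 0 < c) :
    ConvexOn ℝ (Ioi 0) (fun t => t * f (c / t)) := by
  refine ⟨convex_Ioi 0, fun x hx y hy α β hα hβ hαβ => ?_⟩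
  rw [mem_Ioi] at hx hy
  simp only [smul_eq_mul]
  have hs : 0 < α * x + β * y := by
    simpa using (convex_Ioi 0) (mem_Ioi.2 hx) (mem_Ioi.2 hy) hα hβ hαβ
  -- `c/s` is the combination of `c/x` and `c/y` with weights `αx/s` and `βy/s`.
  have hcomb : α * x / (α * x + β * y) * (c / x) + β * y / (α * x + β * y) * (c / y)
      = c / (α * x + β * y) := by
    field_simp
    exact hαβ
  have key := hf.2 (mem_Ioi.2 (div_pos hc hx)) (mem_Ioi.2 (div_pos hc hy))
    (div_nonneg (mul_nonneg hα hx.le) hs.le) (div_nonneg (mul_nonneg hβ hy.le) hs.le)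
    (by field_simp)
  simp only [smul_eq_mul, hcomb] at key
  calc (α * x + β * y) * f (c / (α * x + β * y))
      ≤ (α * x + β * y) * (α * x / (α * x + β * y) * f (c / x)
          + β * y / (α * x + β * y) * f (c / y)) := mul_le_mul_of_nonneg_left key hs.le
    _ = α * (x * f (c / x)) + β * (y * f (c / y)) := by field_simp

theorem perspective_ah (f : ℝ → ℝ) (hf : ∀ x ∈ Set.Ioi (0:ℝ), 0 < f x)
    (hAH : ∀ u ∈ Set.Ioi (0:ℝ), ∀ v ∈ Set.Ioi (0:ℝ), ∀ α ∈ Set.Icc (0:ℝ) 1,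
      f (α * u + (1 - α) * v) ≤ (α / f u + (1 - α) / f v)⁻¹)
    (g : ℝ → ℝ → ℝ) (hg : ∀ x y : ℝ, g x y = y * f (x / y)) :
    ∀ a ∈ Set.Ioi (0:ℝ), ∀ b ∈ Set.Ioi (0:ℝ), ∀ x ∈ Set.Ioi (0:ℝ), ∀ y ∈ Set.Ioi (0:ℝ),
      ∀ α ∈ Set.Icc (0:ℝ) 1,
      g (α * a + (1 - α) * b) (α * x + (1 - α) * y) ≤
        (α / (α * g a x + (1 - α) * g a y) + (1 - α) / (α * g b x + (1 - α) * g b y))⁻¹ := by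
  intro a ha b hb x hx y hy α ⟨hα₀, hα₁⟩
  set s := α * x + (1 - α) * y
  have hs : 0 < s := weightedArithMean_pos hx hy hα₀ hα₁
  have hconv := convexOn_Ioi_of_harmonic hf hAH
  have hpersp : ∀ c ∈ Ioi (0 : ℝ), s * f (c / s) ≤ α * g c x + (1 - α) * g c y := fun c hc => by
    simpa [hg] using (hconv.mul_comp_div hc).2 hx hy hα₀ (sub_nonneg.2 hα₁) (add_sub_cancel α 1)
  calc g (α * a + (1 - α) * b) s = s * f (α * (a / s) + (1 - α) * (b / s)) := by
        rw [hg]; field_simp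
    _ ≤ s * weightedHarmonicMean α (f (a / s)) (f (b / s)) :=
        mul_le_mul_of_nonneg_left (hAH _ (div_pos ha hs) _ (div_pos hb hs) α ⟨hα₀, hα₁⟩) hs.le
    _ = weightedHarmonicMean α (s * f (a / s)) (s * f (b / s)) :=
        (weightedHarmonicMean_mul s).symm
    _ ≤ weightedHarmonicMean α (α * g a x + (1 - α) * g a y) (α * g b x + (1 - α) * g b y) :=
        weightedHarmonicMean_mono (mul_pos hs (hf _ (div_pos ha hs)))
          (mul_pos hs (hf _ (div_pos hb hs))) hα₀ hα₁
          (hpersp a ha) (hpersp b hb)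
end

section
/- Let f:(0,∞)→(0,∞) be AG-convex (hence convex) and g(x,y)=y f(x/y). Then for all a,b,x,y>0 and α∈[0,1]: g(αa+(1-α)b, αx+(1-α)y) ≤ [αg(a,x)+(1-α)g(a,y)]^α · [αg(b,x)+(1-α)g(b,y)]^{1-α}. -/
/-!
Put `s = αx + (1-α)y`. AG-convexity of `f` passes to `u ↦ s f(u/s) = g(u, s)`, so
`g(αa + (1-α)b, s) ≤ g(a,s)^α g(b,s)^(1-α)`. By weighted AM-GM an AG-convex function is convex,
and the perspective of a convex function is convex in its second argument, so
`g(c, s) ≤ α g(c,x) + (1-α) g(c,y)` for `c = a, b`; monotonicity of the weighted geometric mean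
finishes the proof.
-/

open Set

def AGConvexOn {E : Type*} [AddCommGroup E] [Module ℝ E] (s : Set E) (f : E → ℝ) : Prop :=
  ∀ u ∈ s, ∀ v ∈ s, ∀ α ∈ Icc (0 : ℝ) 1, f (α • u + (1 - α) • v) ≤ f u ^ α * f v ^ (1 - α)

theorem perspective_nonneg {f : ℝ → ℝ} (hf : ∀ x ∈ Ioi (0 : ℝ), 0 ≤ f x) {x y : ℝ}
    (hx : 0 < x) (hy : 0 < y) : 0 ≤ perspective f x y :=
  mul_nonneg hy.le (hf _ (div_pos hx hy))

theorem AGConvexOn.convexOn {E : Type*} [AddCommGroup E] [Module ℝ E] {s : Set E} {f : E → ℝ}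
    (h : AGConvexOn s f) (hs : Convex ℝ s) (hf : ∀ x ∈ s, 0 ≤ f x) : ConvexOn ℝ s f := by
  refine ⟨hs, fun u hu v hv α β hα hβ hαβ => ?_⟩
  obtain rfl : β = 1 - α := by linarith
  calc f (α • u + (1 - α) • v) ≤ f u ^ α * f v ^ (1 - α) := h u hu v hv α ⟨hα, by linarith⟩
    _ ≤ α * f u + (1 - α) * f v :=
      Real.geom_mean_le_arith_mean2_weighted hα hβ (hf u hu) (hf v hv) hαβ

theorem AGConvexOn.perspective {f : ℝ → ℝ} (h : AGConvexOn (Ioi 0) f)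
    (hf : ∀ x ∈ Ioi (0 : ℝ), 0 ≤ f x) {t : ℝ} (ht : 0 < t) :
    AGConvexOn (Ioi 0) (fun u => perspective f u t) := by
  intro u hu v hv α hα
  have hu' : u / t ∈ Ioi 0 := div_pos hu ht
  have hv' : v / t ∈ Ioi 0 := div_pos hv ht
  have hsplit : t ^ α * t ^ (1 - α) = t := by
    rw [← Real.rpow_add ht, add_sub_cancel, Real.rpow_one]
  have hdiv : (α • u + (1 - α) • v) / t = α • (u / t) + (1 - α) • (v / t) := by
    simp only [smul_eq_mul]; ring
  calc t * f ((α • u + (1 - α) • v) / t)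
      ≤ t * (f (u / t) ^ α * f (v / t) ^ (1 - α)) := by
        rw [hdiv]; exact mul_le_mul_of_nonneg_left (h _ hu' _ hv' α hα) ht.le
    _ = (t * f (u / t)) ^ α * (t * f (v / t)) ^ (1 - α) := by
        rw [Real.mul_rpow ht.le (hf _ hu'), Real.mul_rpow ht.le (hf _ hv')]
        linear_combination (f (u / t) ^ α * f (v / t) ^ (1 - α)) * hsplit.symm

theorem ConvexOn.perspective {f : ℝ → ℝ} (hf : ConvexOn ℝ (Ioi 0) f) {c : ℝ} (hc : 0 < c) :
    ConvexOn ℝ (Ioi 0) (perspective f c) := by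
  refine ⟨convex_Ioi 0, fun x hx y hy α β hα hβ hαβ => ?_⟩
  have hx' : 0 < x := hx
  have hy' : 0 < y := hy
  have hs : 0 < α * x + β * y := convex_Ioi 0 hx hy hα hβ hαβ
  -- `c / (αx + βy)` is the average of `c / x` and `c / y` with weights proportional to `αx`, `βy`.
  have hweights : α * x / (α * x + β * y) + β * y / (α * x + β * y) = 1 := by
    field_simp
  have hc_div : c / (α * x + β * y) =
      (α * x / (α * x + β * y)) • (c / x) + (β * y / (α * x + β * y)) • (c / y) := by
    simp only [smul_eq_mul]; field_simp; linarith
  have hconv := hf.2 (div_pos hc hx') (div_pos hc hy') (by positivity) (by positivity) hweights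
  simp only [smul_eq_mul] at hconv ⊢
  calc (α * x + β * y) * f (c / (α * x + β * y))
      ≤ (α * x + β * y) * (α * x / (α * x + β * y) * f (c / x)
          + β * y / (α * x + β * y) * f (c / y)) := by
        rw [hc_div]; exact mul_le_mul_of_nonneg_left hconv hs.le
    _ = α * (x * f (c / x)) + β * (y * f (c / y)) := by field_simp

theorem perspective_ag (f : ℝ → ℝ) (hf : ∀ x ∈ Set.Ioi (0:ℝ), 0 < f x)
    (hAG : ∀ u ∈ Set.Ioi (0:ℝ), ∀ v ∈ Set.Ioi (0:ℝ), ∀ α ∈ Set.Icc (0:ℝ) 1,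
      f (α * u + (1 - α) * v) ≤ f u ^ α * f v ^ (1 - α))
    (g : ℝ → ℝ → ℝ) (hg : ∀ x y : ℝ, g x y = y * f (x / y)) :
    ∀ a ∈ Set.Ioi (0:ℝ), ∀ b ∈ Set.Ioi (0:ℝ), ∀ x ∈ Set.Ioi (0:ℝ), ∀ y ∈ Set.Ioi (0:ℝ),
      ∀ α ∈ Set.Icc (0:ℝ) 1,
      g (α * a + (1 - α) * b) (α * x + (1 - α) * y) ≤
        (α * g a x + (1 - α) * g a y) ^ α * (α * g b x + (1 - α) * g b y) ^ (1 - α) := by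
  obtain rfl : g = perspective f := funext₂ hg
  intro a ha b hb x hx y hy α ⟨hα0, hα1⟩
  have hf' : ∀ x ∈ Ioi (0 : ℝ), 0 ≤ f x := fun x hx => (hf x hx).le
  have hAG' : AGConvexOn (Ioi 0) f := hAG
  have hs : 0 < α * x + (1 - α) * y := convex_Ioi 0 hx hy hα0 (by linarith) (by ring)
  have hconv : ∀ c ∈ Ioi (0 : ℝ), perspective f c (α * x + (1 - α) * y) ≤
      α * perspective f c x + (1 - α) * perspective f c y := fun c hc =>
    ((hAG'.convexOn (convex_Ioi 0) hf').perspective hc).2 hx hy hα0 (by linarith) (by ring)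
  calc perspective f (α * a + (1 - α) * b) (α * x + (1 - α) * y)
      ≤ perspective f a (α * x + (1 - α) * y) ^ α
          * perspective f b (α * x + (1 - α) * y) ^ (1 - α) :=
        hAG'.perspective hf' hs a ha b hb α ⟨hα0, hα1⟩
    _ ≤ _ := by
        have hpos_a := perspective_nonneg hf' ha hs
        have hpos_b := perspective_nonneg hf' hb hs
        exact mul_le_mul (Real.rpow_le_rpow hpos_a (hconv a ha) hα0)
          (Real.rpow_le_rpow hpos_b (hconv b hb) (by linarith))
          (Real.rpow_nonneg hpos_b _) (Real.rpow_nonneg (hpos_a.trans (hconv a ha)) _)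
end

section
/- Let f:(0,∞)→(0,∞) be GH-convex, i.e., f(u^α v^{1-α}) ≤ (α/f(u)+(1-α)/f(v))^{-1} for u,v>0, α∈[0,1], and let g(x,y)=y f(x/y). Then g is jointly GG-convex: g(a^α b^{1-α}, x^α y^{1-α}) ≤ g(a,x)^α g(b,y)^{1-α} for all a,b,x,y>0 and α∈[0,1]. -/
/-!
By the weighted harmonic–geometric mean inequality, a positive GH-convex function is GG-convex:
`f (u^α v^(1-α)) ≤ H_α(f u, f v) ≤ f(u)^α f(v)^(1-α)`. The perspective inherits GG-convexity
because the weighted geometric mean is multiplicative: with `u = a/x`, `v = b/y`, the point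
`a^α b^(1-α) / (x^α y^(1-α))` is `u^α v^(1-α)`, and the factor `x^α y^(1-α)` distributes over
`f(u)^α f(v)^(1-α)`.
-/

open Set

namespace Real

theorem harm_mean_le_geom_mean2_weighted {w₁ w₂ p₁ p₂ : ℝ} (hw₁ : 0 ≤ w₁) (hw₂ : 0 ≤ w₂)
    (hw : w₁ + w₂ = 1) (hp₁ : 0 < p₁) (hp₂ : 0 < p₂) :
    (w₁ / p₁ + w₂ / p₂)⁻¹ ≤ p₁ ^ w₁ * p₂ ^ w₂ := by
  have hgm_inv : (p₁ ^ w₁ * p₂ ^ w₂)⁻¹ ≤ w₁ / p₁ + w₂ / p₂ := by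
    calc (p₁ ^ w₁ * p₂ ^ w₂)⁻¹ = p₁⁻¹ ^ w₁ * p₂⁻¹ ^ w₂ := by
          rw [mul_inv, inv_rpow hp₁.le, inv_rpow hp₂.le]
      _ ≤ w₁ * p₁⁻¹ + w₂ * p₂⁻¹ :=
          geom_mean_le_arith_mean2_weighted hw₁ hw₂ (inv_nonneg.2 hp₁.le) (inv_nonneg.2 hp₂.le) hw
      _ = w₁ / p₁ + w₂ / p₂ := by simp only [div_eq_mul_inv]
  exact inv_le_of_inv_le₀ (by positivity) hgm_inv

end Real

def GHConvexOn (s : Set ℝ) (f : ℝ → ℝ) : Prop :=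
  ∀ u ∈ s, ∀ v ∈ s, ∀ α ∈ Icc (0 : ℝ) 1, f (u ^ α * v ^ (1 - α)) ≤ (α / f u + (1 - α) / f v)⁻¹

def GGConvexOn (s : Set ℝ) (f : ℝ → ℝ) : Prop :=
  ∀ u ∈ s, ∀ v ∈ s, ∀ α ∈ Icc (0 : ℝ) 1, f (u ^ α * v ^ (1 - α)) ≤ f u ^ α * f v ^ (1 - α)

theorem GHConvexOn.ggConvexOn {s : Set ℝ} {f : ℝ → ℝ} (hf : GHConvexOn s f)
    (hpos : ∀ x ∈ s, 0 < f x) : GGConvexOn s f := by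
  intro u hu v hv α hα
  exact (hf u hu v hv α hα).trans <|
    Real.harm_mean_le_geom_mean2_weighted hα.1 (sub_nonneg.2 hα.2) (add_sub_cancel α 1)
      (hpos u hu) (hpos v hv)

theorem GGConvexOn.perspective_le {f : ℝ → ℝ} (hf : GGConvexOn (Ioi 0) f)
    (hnonneg : ∀ x ∈ Ioi (0 : ℝ), 0 ≤ f x) {a b x y : ℝ} (ha : 0 < a) (hb : 0 < b) (hx : 0 < x)
    (hy : 0 < y) {α : ℝ} (hα : α ∈ Icc (0 : ℝ) 1) :
    (x ^ α * y ^ (1 - α)) * f ((a ^ α * b ^ (1 - α)) / (x ^ α * y ^ (1 - α))) ≤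
      (x * f (a / x)) ^ α * (y * f (b / y)) ^ (1 - α) := by
  have hquot : (a ^ α * b ^ (1 - α)) / (x ^ α * y ^ (1 - α)) = (a / x) ^ α * (b / y) ^ (1 - α) := by
    rw [Real.div_rpow ha.le hx.le, Real.div_rpow hb.le hy.le, mul_div_mul_comm]
  have hax : a / x ∈ Ioi (0 : ℝ) := div_pos ha hx
  have hby : b / y ∈ Ioi (0 : ℝ) := div_pos hb hy
  calc (x ^ α * y ^ (1 - α)) * f ((a ^ α * b ^ (1 - α)) / (x ^ α * y ^ (1 - α)))
      ≤ (x ^ α * y ^ (1 - α)) * (f (a / x) ^ α * f (b / y) ^ (1 - α)) := by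
        rw [hquot]
        exact mul_le_mul_of_nonneg_left (hf _ hax _ hby α hα) (by positivity)
    _ = (x * f (a / x)) ^ α * (y * f (b / y)) ^ (1 - α) := by
        rw [Real.mul_rpow hx.le (hnonneg _ hax), Real.mul_rpow hy.le (hnonneg _ hby)]
        ring

theorem perspective_gh_implies_gg (f : ℝ → ℝ) (hf : ∀ x ∈ Set.Ioi (0:ℝ), 0 < f x)
    (hGH : ∀ u ∈ Set.Ioi (0:ℝ), ∀ v ∈ Set.Ioi (0:ℝ), ∀ α ∈ Set.Icc (0:ℝ) 1,
      f (u ^ α * v ^ (1 - α)) ≤ (α / f u + (1 - α) / f v)⁻¹)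
    (g : ℝ → ℝ → ℝ) (hg : ∀ x y : ℝ, g x y = y * f (x / y)) :
    ∀ a ∈ Set.Ioi (0:ℝ), ∀ b ∈ Set.Ioi (0:ℝ), ∀ x ∈ Set.Ioi (0:ℝ), ∀ y ∈ Set.Ioi (0:ℝ),
      ∀ α ∈ Set.Icc (0:ℝ) 1,
      g (a ^ α * b ^ (1 - α)) (x ^ α * y ^ (1 - α)) ≤ g a x ^ α * g b y ^ (1 - α) := by
  intro a ha b hb x hx y hy α hα
  have hGG : GGConvexOn (Ioi 0) f := GHConvexOn.ggConvexOn hGH hf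
  simp only [hg]
  exact hGG.perspective_le (fun t ht ↦ (hf t ht).le) ha hb hx hy hα
end

section
/- Let f:(0,∞)→(0,∞) be AH-convex, and let a_1,…,a_n, b_1,…,b_n > 0 with sums A=∑a_i, B=∑b_i. Then B·f(A/B) ≤ B² / (∑_i b_i / f(a_i/b_i)) ≤ ∑_i b_i f(a_i/b_i). -/
theorem csiszar_ah (f : ℝ → ℝ) (hf : ∀ x ∈ Set.Ioi (0:ℝ), 0 < f x)
    (hAH : ∀ x ∈ Set.Ioi (0:ℝ), ∀ y ∈ Set.Ioi (0:ℝ), ∀ α ∈ Set.Icc (0:ℝ) 1,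
      f (α * x + (1 - α) * y) ≤ (α / f x + (1 - α) / f y)⁻¹)
    (n : ℕ) (a b : Fin n → ℝ) (ha : ∀ i, 0 < a i) (hb : ∀ i, 0 < b i)
    (A B : ℝ) (hA : A = ∑ i, a i) (hB : B = ∑ i, b i) :
    B * f (A / B) ≤ B ^ 2 / (∑ i, b i / f (a i / b i)) ∧
      B ^ 2 / (∑ i, b i / f (a i / b i)) ≤ ∑ i, b i * f (a i / b i) := by
  rcases Nat.eq_zero_or_pos n with hn | hn
  · subst hn hA hB
    simp
  -- positivity facts
  have hB0 : 0 < B := by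
    subst hB
    exact Finset.sum_pos (fun i _ => hb i) (Finset.univ_nonempty_iff.2 (Fin.pos_iff_nonempty.1 hn))
  have hA0 : 0 < A := by
    subst hA
    exact Finset.sum_pos (fun i _ => ha i) (Finset.univ_nonempty_iff.2 (Fin.pos_iff_nonempty.1 hn))
  have hfi : ∀ i, 0 < f (a i / b i) := fun i => hf _ (div_pos (ha i) (hb i))
  have hS : 0 < ∑ i, b i / f (a i / b i) :=
    Finset.sum_pos (fun i _ => div_pos (hb i) (hfi i))
      (Finset.univ_nonempty_iff.2 (Fin.pos_iff_nonempty.1 hn))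
  set S := ∑ i, b i / f (a i / b i) with hSdef
  -- 1/f is concave on Ioi 0
  have hconc : ConcaveOn ℝ (Set.Ioi 0) (fun x => (f x)⁻¹) := by
    refine ⟨convex_Ioi 0, ?_⟩
    intro x hx y hy α β hα hβ hαβ
    have hz : α • x + β • y ∈ Set.Ioi (0:ℝ) := (convex_Ioi 0) hx hy hα hβ hαβ
    have hfz : 0 < f (α • x + β • y) := hf _ hz
    have hβ' : β = 1 - α := by linarith
    have key := hAH x hx y hy α ⟨hα, by linarith⟩
    rw [← hβ'] at key
    simp only [smul_eq_mul] at hz hfz ⊢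
    have hs : 0 < α / f x + β / f y := by
      rcases lt_or_ge 0 α with h | h
      · have := div_pos h (hf x hx)
        have := div_nonneg hβ (hf y hy).le
        linarith
      · have hβpos : 0 < β := by linarith
        have := div_pos hβpos (hf y hy)
        have := div_nonneg hα (hf x hx).le
        linarith
    have h1 : f (α * x + β * y) * (α / f x + β / f y) ≤ 1 := by
      have := mul_le_mul_of_nonneg_right key hs.le
      rwa [inv_mul_cancel₀ hs.ne'] at this
    have h2 : α / f x + β / f y ≤ (f (α * x + β * y))⁻¹ := by
      rw [inv_eq_one_div, le_div_iff₀ hfz]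
      nlinarith
    calc α * (f x)⁻¹ + β * (f y)⁻¹ = α / f x + β / f y := by
          rw [div_eq_mul_inv, div_eq_mul_inv]
      _ ≤ (f (α * x + β * y))⁻¹ := h2
  -- Jensen
  have hw1 : ∑ i, b i / B = 1 := by
    rw [← Finset.sum_div, ← hB, div_self hB0.ne']
  have hjen := hconc.le_map_sum (w := fun i => b i / B) (p := fun i => a i / b i)
    (fun i _ => (div_pos (hb i) hB0).le) hw1 (fun i _ => div_pos (ha i) (hb i))
  have hsum1 : ∑ i, (b i / B) • (a i / b i) = A / B := by
    rw [hA, Finset.sum_div]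
    refine Finset.sum_congr rfl fun i _ => ?_
    rw [smul_eq_mul]
    calc b i / B * (a i / b i) = a i / B * (b i / b i) := by ring
      _ = a i / B := by rw [div_self (hb i).ne', mul_one]
  have hsum2 : ∑ i, (b i / B) • (f (a i / b i))⁻¹ = S / B := by
    rw [hSdef, Finset.sum_div]
    refine Finset.sum_congr rfl fun i _ => ?_
    rw [smul_eq_mul]
    field_simp
  rw [hsum1] at hjen
  have hjen' : S / B ≤ (f (A / B))⁻¹ := by
    rw [← hsum2]
    exact hjen
  have hfAB : 0 < f (A / B) := hf _ (div_pos hA0 hB0)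
  constructor
  · rw [le_div_iff₀ hS]
    have h3 : S ≤ (f (A / B))⁻¹ * B := by rwa [div_le_iff₀ hB0] at hjen'
    have h4 : f (A / B) * S ≤ B := by
      have := mul_le_mul_of_nonneg_left h3 hfAB.le
      rwa [← mul_assoc, mul_inv_cancel₀ hfAB.ne', one_mul] at this
    nlinarith
  · rw [div_le_iff₀ hS]
    have hcs := Finset.sum_mul_sq_le_sq_mul_sq Finset.univ
      (fun i => Real.sqrt (b i / f (a i / b i))) (fun i => Real.sqrt (b i * f (a i / b i)))
    have he1 : ∀ i, Real.sqrt (b i / f (a i / b i)) * Real.sqrt (b i * f (a i / b i)) = b i := by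
      intro i
      rw [← Real.sqrt_mul (div_nonneg (hb i).le (hfi i).le)]
      have : b i / f (a i / b i) * (b i * f (a i / b i))
          = b i ^ 2 * (f (a i / b i) / f (a i / b i)) := by ring
      rw [this, div_self (hfi i).ne', mul_one, Real.sqrt_sq (hb i).le]
    have he2 : ∀ i, Real.sqrt (b i / f (a i / b i)) ^ 2 = b i / f (a i / b i) := fun i =>
      Real.sq_sqrt (div_nonneg (hb i).le (hfi i).le)
    have he3 : ∀ i, Real.sqrt (b i * f (a i / b i)) ^ 2 = b i * f (a i / b i) := fun i =>
      Real.sq_sqrt (mul_nonneg (hb i).le (hfi i).le)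
    simp only [he1, he2, he3] at hcs
    rw [← hB] at hcs
    calc B ^ 2 ≤ S * ∑ i, b i * f (a i / b i) := hcs
      _ = (∑ i, b i * f (a i / b i)) * S := mul_comm _ _
end

section
/- Let f:(0,∞)→(0,∞) be AG-convex, and let a_1,…,a_n, b_1,…,b_n > 0 with A=∑a_i, B=∑b_i. Then B·f(A/B) ≤ B·exp( (1/B) ∑_i b_i log f(a_i/b_i) ) ≤ ∑_i b_i f(a_i/b_i). -/
/-!
AG-convexity of `f` is exactly convexity of `log ∘ f`, so Jensen's inequality for `log ∘ f`
with the weights `b i / B` at the points `a i / b i`, whose barycentre is `A / B`, gives the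
first inequality. The second is the weighted AM-GM inequality `exp (∑ wᵢ log yᵢ) ≤ ∑ wᵢ yᵢ`,
i.e. Jensen's inequality for `exp`.
-/

open Real Finset

theorem convexOn_log_comp_of_agConvex {s : Set ℝ} (hs : Convex ℝ s) {f : ℝ → ℝ}
    (hf : ∀ x ∈ s, 0 < f x)
    (hAG : ∀ x ∈ s, ∀ y ∈ s, ∀ α ∈ Set.Icc (0:ℝ) 1,
      f (α * x + (1 - α) * y) ≤ f x ^ α * f y ^ (1 - α)) :
    ConvexOn ℝ s (fun x => log (f x)) := by
  refine ⟨hs, fun x hx y hy p q hp hq hpq => ?_⟩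
  obtain rfl : q = 1 - p := by linarith
  have hmem : p * x + (1 - p) * y ∈ s := hs hx hy hp hq hpq
  calc log (f (p * x + (1 - p) * y))
      ≤ log (f x ^ p * f y ^ (1 - p)) :=
        log_le_log (hf _ hmem) (hAG x hx y hy p ⟨hp, by linarith⟩)
    _ = p * log (f x) + (1 - p) * log (f y) := by
        rw [log_mul (rpow_pos_of_pos (hf x hx) _).ne' (rpow_pos_of_pos (hf y hy) _).ne',
          log_rpow (hf x hx), log_rpow (hf y hy)]

theorem le_exp_sum_mul_log_of_convexOn_log {ι : Type*} {s : Set ℝ} {f : ℝ → ℝ}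
    (hf : ∀ x ∈ s, 0 < f x) (hlog : ConvexOn ℝ s (fun x => log (f x)))
    (t : Finset ι) {w x : ι → ℝ} (hw : ∀ i ∈ t, 0 ≤ w i) (hw1 : ∑ i ∈ t, w i = 1)
    (hx : ∀ i ∈ t, x i ∈ s) :
    f (∑ i ∈ t, w i * x i) ≤ exp (∑ i ∈ t, w i * log (f (x i))) := by
  have hmem : ∑ i ∈ t, w i * x i ∈ s := hlog.1.sum_mem hw hw1 hx
  rw [← exp_log (hf _ hmem)]
  exact exp_le_exp.mpr (hlog.map_sum_le hw hw1 hx)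

theorem exp_sum_mul_log_le_sum_mul {ι : Type*} (t : Finset ι) {w y : ι → ℝ}
    (hw : ∀ i ∈ t, 0 ≤ w i) (hw1 : ∑ i ∈ t, w i = 1) (hy : ∀ i ∈ t, 0 < y i) :
    exp (∑ i ∈ t, w i * log (y i)) ≤ ∑ i ∈ t, w i * y i := by
  calc exp (∑ i ∈ t, w i * log (y i))
      ≤ ∑ i ∈ t, w i * exp (log (y i)) :=
        convexOn_exp.map_sum_le hw hw1 (fun i _ => Set.mem_univ _)
    _ = ∑ i ∈ t, w i * y i := sum_congr rfl fun i hi => by rw [exp_log (hy i hi)]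

theorem csiszar_ag (f : ℝ → ℝ) (hf : ∀ x ∈ Set.Ioi (0:ℝ), 0 < f x)
    (hAG : ∀ x ∈ Set.Ioi (0:ℝ), ∀ y ∈ Set.Ioi (0:ℝ), ∀ α ∈ Set.Icc (0:ℝ) 1,
      f (α * x + (1 - α) * y) ≤ f x ^ α * f y ^ (1 - α))
    (n : ℕ) (a b : Fin n → ℝ) (ha : ∀ i, 0 < a i) (hb : ∀ i, 0 < b i)
    (A B : ℝ) (hA : A = ∑ i, a i) (hB : B = ∑ i, b i) :
    B * f (A / B) ≤ B * Real.exp ((1 / B) * ∑ i, b i * Real.log (f (a i / b i))) ∧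
      B * Real.exp ((1 / B) * ∑ i, b i * Real.log (f (a i / b i))) ≤
        ∑ i, b i * f (a i / b i) := by
  rcases Nat.eq_zero_or_pos n with rfl | hn
  · simp [hB]
  have hB0 : 0 < B := hB ▸ sum_pos (fun i _ => hb i) ⟨⟨0, hn⟩, mem_univ _⟩
  have hw : ∀ i ∈ univ, 0 ≤ b i / B := fun i _ => (div_pos (hb i) hB0).le
  have hw1 : ∑ i, b i / B = 1 := by rw [← sum_div, ← hB, div_self hB0.ne']
  have hx : ∀ i ∈ univ, a i / b i ∈ Set.Ioi (0:ℝ) := fun i _ => div_pos (ha i) (hb i)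
  have hbary : A / B = ∑ i, b i / B * (a i / b i) := by
    rw [hA, sum_div]
    exact sum_congr rfl fun i _ => by field_simp [(hb i).ne']
  have hweights : ∀ g : Fin n → ℝ, ∑ i, b i * g i = B * ∑ i, b i / B * g i := fun g => by
    rw [mul_sum]
    exact sum_congr rfl fun i _ => by field_simp
  rw [hweights, ← mul_assoc, one_div_mul_cancel hB0.ne', one_mul, hweights]
  refine ⟨mul_le_mul_of_nonneg_left ?_ hB0.le, mul_le_mul_of_nonneg_left ?_ hB0.le⟩
  · rw [hbary]
    exact le_exp_sum_mul_log_of_convexOn_log hf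
      (convexOn_log_comp_of_agConvex (convex_Ioi 0) hf hAG) univ hw hw1 hx
  · exact exp_sum_mul_log_le_sum_mul univ hw hw1 fun i hi => hf _ (hx i hi)
end

section
/- Let f:J→ℝ be continuous and GG-convex on an interval J⊆(0,∞), A an n×n Hermitian matrix with eigenvalues in J, and η a unit vector in ℂⁿ. Then f(exp⟨(log A)η,η⟩) ≤ exp⟨(log f(A))η,η⟩. -/
/-!
Put `tᵢ = log λᵢ`, `yᵢ = log f(λᵢ)` and `wᵢ = ‖⟪uᵢ, η⟫‖²`, so that `∑ wᵢ = 1`. GG-convexity,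
combined with `|u ^ α| ≤ exp (α log u)` (which absorbs non-positive values of `f`), says that
`f ∘ exp` lies below `exp` of every chord joining two points `(tᵢ, yᵢ)`. The weighted average
`(x, Y) = ∑ wᵢ (tᵢ, yᵢ)` lies above one of these chords: pairing every point left of `x` with every
point right of `x`, with weight proportional to `wᵢ wⱼ (tⱼ - tᵢ)`, writes `(x, Y)` as a mixture of
points on chords over `x`.
-/

open scoped ComplexInnerProductSpace
open Finset Set Real

theorem cross_pos_of_forall_chord_gt {a b ya yb x Y : ℝ}
    (H : ∀ α ∈ Icc (0 : ℝ) 1, α * a + (1 - α) * b = x → Y < α * ya + (1 - α) * yb)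
    (hax : a ≤ x) (hxb : x < b) : 0 < (b - x) * (ya - Y) + (x - a) * (yb - Y) := by
  have hd : 0 < b - a := by linarith
  obtain ⟨α, hα⟩ : ∃ α, α * (b - a) = b - x := ⟨_, div_mul_cancel₀ _ hd.ne'⟩
  have hα₀ : 0 ≤ α := nonneg_of_mul_nonneg_left (by linarith) hd
  have hα₁ : α ≤ 1 := le_of_mul_le_mul_right (by linarith) hd
  have hchord := H α ⟨hα₀, hα₁⟩ (by linear_combination -hα)
  calc 0 < (b - a) * (α * ya + (1 - α) * yb - Y) := mul_pos hd (sub_pos.2 hchord)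
    _ = (b - x) * (ya - Y) + (x - a) * (yb - Y) := by linear_combination (ya - yb) * hα

variable {ι : Type*} {s : Finset ι} {w t y : ι → ℝ}

theorem sum_sum_mul_cross_eq {L R : Finset ι} {x : ℝ} (u : ι → ℝ)
    (hbal : ∑ i ∈ L, w i * (x - t i) = ∑ j ∈ R, w j * (t j - x)) :
    ∑ i ∈ L, ∑ j ∈ R, w i * w j * ((t j - x) * u i + (x - t i) * u j) =
      (∑ j ∈ R, w j * (t j - x)) * (∑ i ∈ L, w i * u i + ∑ j ∈ R, w j * u j) := by
  rw [mul_add, mul_comm]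
  nth_rewrite 2 [← hbal]
  simp only [sum_mul_sum, ← sum_add_distrib]
  exact sum_congr rfl fun i _ => sum_congr rfl fun j _ => by ring

theorem sum_mul_sub_weighted_sum (hw₁ : ∑ i ∈ s, w i = 1) (t : ι → ℝ) :
    ∑ i ∈ s, w i * (t i - ∑ k ∈ s, w k * t k) = 0 := by
  simp only [mul_sub, sum_sub_distrib, ← sum_mul, hw₁, one_mul, sub_self]

theorem exists_pos_weight_le_weighted_sum (hw : ∀ i ∈ s, 0 ≤ w i) (hw₁ : ∑ i ∈ s, w i = 1) :
    ∃ k ∈ s, 0 < w k ∧ y k ≤ ∑ i ∈ s, w i * y i := by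
  by_contra! H
  obtain ⟨k, hk, hwk⟩ : ∃ k ∈ s, 0 < w k := by
    by_contra! h
    linarith [sum_nonpos h]
  have hterm : ∀ i ∈ s, 0 ≤ w i * (y i - ∑ k ∈ s, w k * y k) := fun i hi =>
    (hw i hi).eq_or_lt.elim (fun h => by simp [← h])
      fun h => mul_nonneg h.le (sub_pos.2 (H i hi h)).le
  have hpos := sum_pos' hterm ⟨k, hk, mul_pos hwk (sub_pos.2 (H k hk hwk))⟩
  exact hpos.ne' (sum_mul_sub_weighted_sum hw₁ y)

theorem eq_of_weight_pos_of_sum_mul_sub_eq_zero {x : ℝ} (hw : ∀ i ∈ s, 0 ≤ w i)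
    (hbal : ∑ i ∈ s, w i * (t i - x) = 0) (hright : ∑ i ∈ s with x < t i, w i * (t i - x) = 0)
    {k : ι} (hk : k ∈ s) (hwk : 0 < w k) : t k = x := by
  rw [← sum_filter_add_sum_filter_not s (fun i => x < t i), hright, zero_add] at hbal
  by_cases hkx : x < t k
  · have := (sum_eq_zero_iff_of_nonneg fun i hi => mul_nonneg (hw i (mem_filter.1 hi).1)
      (sub_pos.2 (mem_filter.1 hi).2).le).1 hright k (mem_filter.2 ⟨hk, hkx⟩)
    exact absurd this (mul_pos hwk (sub_pos.2 hkx)).ne'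
  · have := (sum_eq_zero_iff_of_nonpos fun i hi => mul_nonpos_of_nonneg_of_nonpos
      (hw i (mem_filter.1 hi).1) (sub_nonpos.2 (not_lt.1 (mem_filter.1 hi).2))).1 hbal k
      (mem_filter.2 ⟨hk, hkx⟩)
    linarith [(mul_eq_zero.1 this).resolve_left hwk.ne']

theorem exists_chord_le_weighted_sum (hw : ∀ i ∈ s, 0 ≤ w i) (hw₁ : ∑ i ∈ s, w i = 1) :
    ∃ i ∈ s, ∃ j ∈ s, ∃ α ∈ Icc (0 : ℝ) 1, α * t i + (1 - α) * t j = ∑ k ∈ s, w k * t k ∧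
      α * y i + (1 - α) * y j ≤ ∑ k ∈ s, w k * y k := by
  set x := ∑ k ∈ s, w k * t k
  set Y := ∑ k ∈ s, w k * y k
  by_contra! H
  have hbal := sum_mul_sub_weighted_sum hw₁ t
  set L := s.filter (fun k => ¬ x < t k)
  set R := s.filter (fun k => x < t k)
  set D := ∑ j ∈ R, w j * (t j - x)
  have hL : ∀ i ∈ L, 0 ≤ w i ∧ t i ≤ x := fun i hi =>
    ⟨hw i (mem_filter.1 hi).1, not_lt.1 (mem_filter.1 hi).2⟩
  have hR : ∀ j ∈ R, 0 ≤ w j ∧ x < t j := fun j hj =>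
    ⟨hw j (mem_filter.1 hj).1, (mem_filter.1 hj).2⟩
  have hLR : ∑ i ∈ L, w i * (x - t i) = D := by
    rw [← sum_filter_add_sum_filter_not s (fun k => x < t k)] at hbal
    simp only [← neg_sub (t _) x, mul_neg, sum_neg_distrib]
    linarith
  rcases (sum_nonneg fun j hj => mul_nonneg (hR j hj).1 (sub_pos.2 (hR j hj).2).le : 0 ≤ D).eq_or_lt
    with hD | hD
  -- all the mass sits at `x`
  · obtain ⟨k, hk, hwk, hyk⟩ := exists_pos_weight_le_weighted_sum (y := y) hw hw₁
    have htk := eq_of_weight_pos_of_sum_mul_sub_eq_zero hw hbal hD.symm hk hwk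
    exact (H k hk k hk 1 (by simp) (by simpa using htk)).not_ge (by simpa using hyk)
  -- the mixture identity `sum_sum_mul_cross_eq` has a positive left side and right side `D * 0`
  · obtain ⟨i, hi, hwi⟩ : ∃ i ∈ L, 0 < w i * (x - t i) := by
      by_contra! h
      exact hD.not_ge (hLR.symm.trans_le (sum_nonpos h))
    obtain ⟨j, hj, hwj⟩ : ∃ j ∈ R, 0 < w j * (t j - x) := by
      by_contra! h
      exact hD.not_ge (sum_nonpos h)
    have hpair : ∀ i ∈ L, ∀ j ∈ R, 0 < (t j - x) * (y i - Y) + (x - t i) * (y j - Y) :=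
      fun i hi j hj => cross_pos_of_forall_chord_gt
        (H i (mem_filter.1 hi).1 j (mem_filter.1 hj).1) (hL i hi).2 (hR j hj).2
    have hterm : ∀ i ∈ L, ∀ j ∈ R,
        0 ≤ w i * w j * ((t j - x) * (y i - Y) + (x - t i) * (y j - Y)) := fun i hi j hj =>
      mul_nonneg (mul_nonneg (hL i hi).1 (hR j hj).1) (hpair i hi j hj).le
    have hpos := sum_pos' (fun i hi => sum_nonneg (hterm i hi)) ⟨i, hi, sum_pos' (hterm i hi)
      ⟨j, hj, mul_pos (mul_pos (pos_of_mul_pos_left hwi (sub_nonneg.2 (hL i hi).2))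
        (pos_of_mul_pos_left hwj (sub_pos.2 (hR j hj).2).le)) (hpair i hi j hj)⟩⟩
    rw [sum_sum_mul_cross_eq (fun k => y k - Y) hLR,
      sum_filter_not_add_sum_filter s (fun k => x < t k), sum_mul_sub_weighted_sum hw₁ y,
      mul_zero] at hpos
    exact hpos.false

theorem le_of_forall_chord_le {φ g : ℝ → ℝ} (hg : Monotone g) (hw : ∀ i ∈ s, 0 ≤ w i)
    (hw₁ : ∑ i ∈ s, w i = 1)
    (hchord : ∀ i ∈ s, ∀ j ∈ s, ∀ α ∈ Icc (0 : ℝ) 1,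
      φ (α * t i + (1 - α) * t j) ≤ g (α * y i + (1 - α) * y j)) :
    φ (∑ i ∈ s, w i * t i) ≤ g (∑ i ∈ s, w i * y i) := by
  obtain ⟨i, hi, j, hj, α, hα, hx, hY⟩ := exists_chord_le_weighted_sum (t := t) (y := y) hw hw₁
  rw [← hx]
  exact (hchord i hi j hj α hα).trans (hg hY)

theorem rpow_mul_rpow_le_exp_add (u v α β : ℝ) :
    u ^ α * v ^ β ≤ exp (α * log u + β * log v) :=
  calc u ^ α * v ^ β ≤ |u ^ α| * |v ^ β| := abs_mul (u ^ α) (v ^ β) ▸ le_abs_self _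
    _ ≤ exp (log u * α) * exp (log v * β) :=
      mul_le_mul (abs_rpow_le_exp_log_mul u α) (abs_rpow_le_exp_log_mul v β) (abs_nonneg _)
        (exp_pos _).le
    _ = exp (α * log u + β * log v) := by rw [← exp_add, mul_comm, mul_comm (log v)]

theorem matrix_jensen_gg_general (J : Set ℝ) (hJ : J ⊆ Set.Ioi (0:ℝ))
    (f : ℝ → ℝ)
    (hGG : ∀ x ∈ J, ∀ y ∈ J, ∀ α ∈ Set.Icc (0:ℝ) 1,
      f (x ^ α * y ^ (1 - α)) ≤ f x ^ α * f y ^ (1 - α))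
    {n : ℕ} (A : Matrix (Fin n) (Fin n) ℂ) (hA : A.IsHermitian)
    (hspec : ∀ i, hA.eigenvalues i ∈ J)
    (η : EuclideanSpace ℂ (Fin n)) (hη : ‖η‖ = 1) :
    f (Real.exp (∑ i, ‖⟪hA.eigenvectorBasis i, η⟫‖ ^ 2 * Real.log (hA.eigenvalues i))) ≤
      Real.exp (∑ i, ‖⟪hA.eigenvectorBasis i, η⟫‖ ^ 2 * Real.log (f (hA.eigenvalues i))) := by
  have hw₁ : ∑ i, ‖⟪hA.eigenvectorBasis i, η⟫‖ ^ 2 = 1 := by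
    rw [hA.eigenvectorBasis.sum_sq_norm_inner_right, hη, one_pow]
  refine le_of_forall_chord_le (φ := fun r => f (exp r)) exp_monotone
    (fun i _ => by positivity) hw₁ fun i _ j _ α hα => ?_
  have hposi : 0 < hA.eigenvalues i := hJ (hspec i)
  have hposj : 0 < hA.eigenvalues j := hJ (hspec j)
  calc f (exp (α * log (hA.eigenvalues i) + (1 - α) * log (hA.eigenvalues j)))
      = f (hA.eigenvalues i ^ α * hA.eigenvalues j ^ (1 - α)) := by
        rw [rpow_def_of_pos hposi, rpow_def_of_pos hposj, ← exp_add, mul_comm α, mul_comm (1 - α)]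
    _ ≤ f (hA.eigenvalues i) ^ α * f (hA.eigenvalues j) ^ (1 - α) :=
        hGG _ (hspec i) _ (hspec j) α hα
    _ ≤ _ := rpow_mul_rpow_le_exp_add _ _ _ _

/-- Matrix Jensen inequality for GG-convex functions.  For a Hermitian matrix
`A = ∑ λᵢ Pᵢ` and a unit vector `η`, the inner products `⟨(log A)η, η⟩` and
`⟨(log f(A))η, η⟩` are expressed via the spectral decomposition as
`∑ ‖⟨uᵢ, η⟩‖² log λᵢ` and `∑ ‖⟨uᵢ, η⟩‖² log f(λᵢ)`, `uᵢ` an orthonormal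
eigenbasis. -/
theorem matrix_jensen_gg (J : Set ℝ) (hJ : J ⊆ Set.Ioi (0:ℝ))
    (f : ℝ → ℝ) (hfc : ContinuousOn f J)
    (hGG : ∀ x ∈ J, ∀ y ∈ J, ∀ α ∈ Set.Icc (0:ℝ) 1,
      f (x ^ α * y ^ (1 - α)) ≤ f x ^ α * f y ^ (1 - α))
    {n : ℕ} (A : Matrix (Fin n) (Fin n) ℂ) (hA : A.IsHermitian)
    (hspec : ∀ i, hA.eigenvalues i ∈ J)
    (η : EuclideanSpace ℂ (Fin n)) (hη : ‖η‖ = 1) :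
    f (Real.exp (∑ i, ‖⟪hA.eigenvectorBasis i, η⟫‖ ^ 2 * Real.log (hA.eigenvalues i))) ≤
      Real.exp (∑ i, ‖⟪hA.eigenvectorBasis i, η⟫‖ ^ 2 * Real.log (f (hA.eigenvalues i))) :=
  matrix_jensen_gg_general J hJ f hGG A hA hspec η hη
end
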